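/- arXiv:2601.00211 — 5 statements merged into one kernel-verified Lean document; each statement's English description precedes it below -/
import Mathlib

section
/- Let X be a set and C a Boolean algebra of sets on X. If C contains a 2-tree, then there exists an injective map from the set of functions ℕ → {0,1} into the set of ultrafilters on C; in particular, C has at least 2^ℵ₀ ultrafilters. -/
open Filter Topology

/-- A Boolean algebra of sets on `X`: contains `∅` and `univ`, closed under
finite unions, finite intersections and complements. -/
def IsBoolAlg {X : Type*} (C : Set (Set X)) : Prop :=
  ∅ ∈ C ∧ Set.univ ∈ C ∧
    (∀ A ∈ C, ∀ B ∈ C, A ∪ B ∈ C) ∧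
    (∀ A ∈ C, ∀ B ∈ C, A ∩ B ∈ C) ∧
    (∀ A ∈ C, Aᶜ ∈ C)

/-- An ultrafilter on a Boolean algebra of sets `C`. -/
def IsUltraOn {X : Type*} (C : Set (Set X)) (U : Set (Set X)) : Prop :=
  U ⊆ C ∧ ∅ ∉ U ∧ Set.univ ∈ U ∧
    (∀ A ∈ U, ∀ B ∈ U, A ∩ B ∈ U) ∧
    (∀ A ∈ U, ∀ B ∈ C, A ⊆ B → B ∈ U) ∧
    (∀ A ∈ C, A ∈ U ∨ Aᶜ ∈ U)

/-- A finitely additive probability measure on `C`. -/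
def IsFAP {X : Type*} (C : Set (Set X)) (μ : Set X → ℝ) : Prop :=
  (∀ A ∈ C, 0 ≤ μ A) ∧ μ Set.univ = 1 ∧
    (∀ A ∈ C, ∀ B ∈ C, A ∩ B = ∅ → μ (A ∪ B) = μ A + μ B)

/-- `μ` is strongly continuous on `C`: for every `ε > 0` there is a finite
partition of `X` into members of `C`, each of measure `< ε`. -/
def StrongCont {X : Type*} (C : Set (Set X)) (μ : Set X → ℝ) : Prop :=
  ∀ ε : ℝ, 0 < ε → ∃ (n : ℕ) (F : Fin n → Set X),
    (∀ i, F i ∈ C) ∧ (⋃ i, F i) = Set.univ ∧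
    (∀ i j, i ≠ j → F i ∩ F j = ∅) ∧ ∀ i, μ (F i) < ε

/-- `μ` is `{0,1}`-valued on `C`. -/
def ZeroOneValued {X : Type*} (C : Set (Set X)) (μ : Set X → ℝ) : Prop :=
  ∀ A ∈ C, μ A = 0 ∨ μ A = 1

/-- A 2-tree in `C`: an injective map from finite binary strings into `C` such
that children are strictly below their parent and the two children of a node
are disjoint. -/
def IsTwoTree {X : Type*} (C : Set (Set X)) (t : List Bool → Set X) : Prop :=
  Function.Injective t ∧ (∀ s, t s ∈ C) ∧
    (∀ s b, t (s ++ [b]) ⊂ t s) ∧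
    ∀ s, t (s ++ [false]) ∩ t (s ++ [true]) = ∅

/-- The double limit property for `f : A × B → ℝ`: whenever both iterated
limits along sequences exist, they are equal. -/
def DLP {A B : Type*} (f : A → B → ℝ) : Prop :=
  ∀ (a : ℕ → A) (b : ℕ → B) (u v : ℕ → ℝ) (L L' : ℝ),
    (∀ i, Tendsto (fun j => f (a i) (b j)) atTop (𝓝 (u i))) →
    Tendsto u atTop (𝓝 L) →
    (∀ j, Tendsto (fun i => f (a i) (b j)) atTop (𝓝 (v j))) →
    Tendsto v atTop (𝓝 L') → L = L'

-- The indicator `χ_R` of a relation `R ⊆ X × Y`.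
open Classical in
noncomputable def chi {X Y : Type*} (R : Set (X × Y)) : X → Y → ℝ :=
  fun a b => if (a, b) ∈ R then 1 else 0

/-- The Boolean algebra of sets generated by `S`. -/
def genAlg {X : Type*} (S : Set (Set X)) : Set (Set X) :=
  ⋂₀ {C : Set (Set X) | IsBoolAlg C ∧ S ⊆ C}

/-- `C_X(R)`: the Boolean algebra on `X` generated by the columns of `R`. -/
def colAlg {X Y : Type*} (R : Set (X × Y)) : Set (Set X) :=
  genAlg {A | ∃ b : Y, A = {x : X | (x, b) ∈ R}}

/-- `C_Y(R)`: the Boolean algebra on `Y` generated by the rows of `R`. -/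
def rowAlg {X Y : Type*} (R : Set (X × Y)) : Set (Set Y) :=
  genAlg {B | ∃ a : X, B = {y : Y | (a, y) ∈ R}}

/-- `d_U = {b ∈ Y : {x : (x,b) ∈ R} ∈ U}`. -/
def dSet {X Y : Type*} (R : Set (X × Y)) (U : Set (Set X)) : Set Y :=
  {b : Y | {x : X | (x, b) ∈ R} ∈ U}

/-- `e_V = {a ∈ X : {y : (a,y) ∈ R} ∈ V}`. -/
def eSet {X Y : Type*} (R : Set (X × Y)) (V : Set (Set Y)) : Set X :=
  {a : X | {y : Y | (a, y) ∈ R} ∈ V}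

/-- Membership in `conv_δ(Z)`: a nonnegative, countably supported weight
function summing to `1`. -/
def IsConvDelta {Z : Type*} (p : Z → ℝ) : Prop :=
  (∀ z, 0 ≤ p z) ∧ (Function.support p).Countable ∧ HasSum p 1

/-- `f_c(p, q) = ∑_{(x,y)} p(x) q(y) f(x,y)`. -/
noncomputable def fc {X Y : Type*} (f : X → Y → ℝ) (p : X → ℝ) (q : Y → ℝ) : ℝ :=
  ∑' z : X × Y, p z.1 * q z.2 * f z.1 z.2

/-- The `k`-order property for a relation `R ⊆ X × Y`. -/
def HasKOrderProp {X Y : Type*} (R : Set (X × Y)) (k : ℕ) : Prop :=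
  ∃ (a : Fin k → X) (b : Fin k → Y), ∀ i j, (a i, b j) ∈ R ↔ i < j

-- The pairing `χ(U, V)` on ultrafilters: `1` if `d_U ∈ V`, else `0`.
open Classical in
noncomputable def chiU {X Y : Type*} (R : Set (X × Y))
    (U : {U : Set (Set X) // IsUltraOn (colAlg R) U})
    (V : {V : Set (Set Y) // IsUltraOn (rowAlg R) V}) : ℝ :=
  if dSet R U.1 ∈ V.1 then 1 else 0

/-- `𝓕` shatters the finite set `S`. -/
def ShattersSet {X : Type*} (F : Set (Set X)) (S : Finset X) : Prop :=
  ∀ T ⊆ S, ∃ A ∈ F, A ∩ ↑S = (↑T : Set X)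

/-- An atomic probability measure on `X`. -/
def IsAtomicMeasure {X : Type*} (μ : Set X → ℝ) : Prop :=
  ∃ (I : Set ℕ) (x : ℕ → X) (r : ℕ → ℝ),
    (∀ i ∈ I, 0 ≤ r i) ∧ HasSum (fun i : I => r (i : ℕ)) 1 ∧
    ∀ A : Set X, μ A = ∑' i : {i : ℕ // i ∈ I ∧ x i ∈ A}, r (i : ℕ)

/-- If a Boolean algebra of sets `C` contains a 2-tree, then there
is an injection from `ℕ → Bool` into the set of ultrafilters on `C`. -/
theorem two_tree_many_ultrafilters {X : Type*} (C : Set (Set X)) (hC : IsBoolAlg C)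
    (t : List Bool → Set X) (ht : IsTwoTree C t) :
    ∃ Φ : (ℕ → Bool) → Set (Set X),
      Function.Injective Φ ∧ ∀ f : ℕ → Bool, IsUltraOn C (Φ f) := by
  classical
  obtain ⟨tinj, tmem, tss, tdisj⟩ := ht
  have tne : ∀ s, (t s).Nonempty := by
    intro s
    rcases Set.eq_empty_or_nonempty (t s) with h | h
    · have hsub : t s ⊆ t (s ++ [true]) := by simp [h]
      exact absurd hsub (tss s true).2
    · exact h
  set sf : (ℕ → Bool) → ℕ → List Bool := fun f n => (List.range n).map f with hsf
  have hstep : ∀ f n, sf f (n + 1) = sf f n ++ [f n] := by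
    intro f n; simp [hsf, List.range_succ]
  have anti : ∀ (f : ℕ → Bool) n m, n ≤ m → t (sf f m) ⊆ t (sf f n) := by
    intro f n m hnm
    induction m with
    | zero => simp_all
    | succ k ih =>
      rcases Nat.lt_or_ge n (k+1) with h | h
      · have hsub : t (sf f (k+1)) ⊆ t (sf f k) := by
          rw [hstep]; exact (tss (sf f k) (f k)).1
        exact hsub.trans (ih (Nat.lt_succ_iff.mp h))
      · have : n = k + 1 := le_antisymm hnm h
        subst this; exact subset_rfl
  haveI : Nonempty X := ⟨(tne []).some⟩
  set F : (ℕ → Bool) → Filter X := fun f => ⨅ n, Filter.principal (t (sf f n)) with hF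
  have hFne : ∀ f, (F f).NeBot := by
    intro f
    apply Filter.iInf_neBot_of_directed
    · intro n m
      refine ⟨max n m, ?_, ?_⟩ <;>
        simp only [ge_iff_le, Filter.le_principal_iff, Filter.mem_principal]
      · exact anti f n _ (le_max_left _ _)
      · exact anti f m _ (le_max_right _ _)
    · intro n
      exact Filter.principal_neBot_iff.mpr (tne _)
  haveI := hFne
  set U : (ℕ → Bool) → Ultrafilter X := fun f => Ultrafilter.of (F f) with hU
  have hUmem : ∀ f n, t (sf f n) ∈ U f := by
    intro f n
    exact Ultrafilter.of_le (F f) (Filter.mem_iInf_of_mem n (Filter.mem_principal_self _))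
  refine ⟨fun f => {A | A ∈ C ∧ A ∈ U f}, ?_, ?_⟩
  · intro f g hfg
    by_contra hne
    have hex : ∃ n, f n ≠ g n := by
      by_contra h
      push_neg at h
      exact hne (funext h)
    set n := Nat.find hex with hn
    have hfn : f n ≠ g n := Nat.find_spec hex
    have hlt : ∀ m < n, f m = g m := fun m hm => by
      by_contra h; exact Nat.find_min hex hm h
    have hseq : sf f n = sf g n := by
      simp only [hsf]
      exact List.map_congr_left (fun a ha => hlt a (List.mem_range.mp ha))
    have hA : t (sf f (n+1)) ∈ {A | A ∈ C ∧ A ∈ U f} := ⟨tmem _, hUmem f (n+1)⟩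
    have hB : t (sf g (n+1)) ∈ {A | A ∈ C ∧ A ∈ U f} := by
      rw [show {A | A ∈ C ∧ A ∈ U f} = {A | A ∈ C ∧ A ∈ U g} from hfg]; exact ⟨tmem _, hUmem g (n+1)⟩
    have hdis : t (sf f (n+1)) ∩ t (sf g (n+1)) = ∅ := by
      rw [hstep, hstep, hseq]
      rcases Bool.eq_false_or_eq_true (f n) with h1 | h1 <;>
        rcases Bool.eq_false_or_eq_true (g n) with h2 | h2 <;>
          simp_all [Set.inter_comm, tdisj (sf g n)]
    have : (∅ : Set X) ∈ U f := by
      rw [← hdis]; exact Filter.inter_mem hA.2 hB.2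
    exact Filter.empty_notMem _ this
  · intro f
    refine ⟨fun A hA => hA.1, fun h => Filter.empty_notMem _ h.2,
      ⟨hC.2.1, Filter.univ_mem⟩, ?_, ?_, ?_⟩
    · intro A hA B hB
      exact ⟨hC.2.2.2.1 A hA.1 B hB.1, Filter.inter_mem hA.2 hB.2⟩
    · intro A hA B hB hAB
      exact ⟨hB, Filter.mem_of_superset hA.2 hAB⟩
    · intro A hA
      rcases (U f).mem_or_compl_mem A with h | h
      · exact Or.inl ⟨hA, h⟩
      · exact Or.inr ⟨hC.2.2.2.2 A hA, h⟩
end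

section
/- Let X be a set, C a Boolean algebra of sets on X, and μ a finitely additive probability measure on C that is strongly continuous on C. Then C contains a 2-tree, each of whose nodes has positive μ-measure. -/
open Filter Topology

section Aux
variable {X : Type*} {C : Set (Set X)} {μ : Set X → ℝ}

lemma mu_empty_aux (hC : IsBoolAlg C) (hμ : IsFAP C μ) : μ ∅ = 0 := by
  have := hμ.2.2 ∅ hC.1 ∅ hC.1 (by simp)
  simp only [Set.union_empty] at this
  linarith

lemma mu_diff_aux (hC : IsBoolAlg C) (hμ : IsFAP C μ) {A B : Set X}
    (hA : A ∈ C) (hB : B ∈ C) (h : B ⊆ A) : μ (A ∩ Bᶜ) = μ A - μ B := by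
  have hAB : A ∩ Bᶜ ∈ C := hC.2.2.2.1 A hA Bᶜ (hC.2.2.2.2 B hB)
  have hadd : μ (B ∪ (A ∩ Bᶜ)) = μ B + μ (A ∩ Bᶜ) := by
    refine hμ.2.2 _ hB _ hAB ?_
    ext x; simp; tauto
  have hU : B ∪ (A ∩ Bᶜ) = A := by
    ext x
    simp only [Set.mem_union, Set.mem_inter_iff, Set.mem_compl_iff]
    constructor
    · rintro (hx | ⟨hx, _⟩) <;> [exact h hx; exact hx]
    · intro hx; by_cases hxB : x ∈ B <;> tauto
  rw [hU] at hadd; linarith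

lemma mu_mono_aux (hC : IsBoolAlg C) (hμ : IsFAP C μ) {A B : Set X}
    (hA : A ∈ C) (hB : B ∈ C) (h : B ⊆ A) : μ B ≤ μ A := by
  have hAB : A ∩ Bᶜ ∈ C := hC.2.2.2.1 A hA Bᶜ (hC.2.2.2.2 B hB)
  have := mu_diff_aux hC hμ hA hB h
  have := hμ.1 _ hAB
  linarith

lemma exists_split_aux (hC : IsBoolAlg C) (hμ : IsFAP C μ) (hsc : StrongCont C μ)
    {A : Set X} (hA : A ∈ C) (hpos : 0 < μ A) :
    ∃ f : Bool → Set X, (∀ b, f b ∈ C) ∧ (∀ b, f b ⊂ A) ∧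
      (∀ b, 0 < μ (f b)) ∧ f false ∩ f true = ∅ := by
  classical
  obtain ⟨n, F, hFC, hFU, hFd, hFs⟩ := hsc (μ A / 2) (by linarith)
  set F' : ℕ → Set X := fun k => if h : k < n then F ⟨k, h⟩ else ∅ with hF'
  have hF'C : ∀ k, F' k ∈ C := by
    intro k; simp only [hF']
    split
    · exact hFC _
    · exact hC.1
  have hF'd : ∀ i j, i ≠ j → F' i ∩ F' j = ∅ := by
    intro i j hij; simp only [hF']
    split
    · split
      · exact hFd _ _ (by simp [Fin.ext_iff, hij])
      · simp
    · simp
  have hF's : ∀ k, μ (F' k) < μ A / 2 := by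
    intro k; simp only [hF']
    split
    · exact hFs _
    · rw [mu_empty_aux hC hμ]; linarith
  set g : ℕ → Set X := fun k => Nat.rec ∅ (fun m S => S ∪ F' m) k with hg
  have hgC : ∀ k, g k ∈ C := by
    intro k; induction k with
    | zero => exact hC.1
    | succ m ih => exact hC.2.2.1 _ ih _ (hF'C m)
  have hgF : ∀ k j, k ≤ j → g k ∩ F' j = ∅ := by
    intro k
    induction k with
    | zero => intro j _; simp [hg]
    | succ m ih =>
      intro j hj
      have h1 : g (m + 1) = g m ∪ F' m := rfl
      rw [h1, Set.union_inter_distrib_right, ih j (by omega),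
        hF'd m j (by omega), Set.union_empty]
  have hsub : ∀ i k, i < k → F' i ⊆ g k := by
    intro i k
    induction k with
    | zero => omega
    | succ m ih =>
      intro hik
      have h1 : g (m + 1) = g m ∪ F' m := rfl
      rw [h1]
      rcases Nat.lt_or_ge i m with h | h
      · exact (ih h).trans Set.subset_union_left
      · have : i = m := by omega
        subst this; exact Set.subset_union_right
  have hgU : g n = Set.univ := by
    apply Set.eq_univ_of_univ_subset
    rw [← hFU]
    intro x hx
    obtain ⟨i, hxi⟩ := Set.mem_iUnion.1 hx
    have : x ∈ F' i := by simp [hF', i.isLt, hxi]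
    exact hsub i n i.isLt this
  set h : ℕ → ℝ := fun k => μ (A ∩ g k) with hh
  have hAgC : ∀ k, A ∩ g k ∈ C := fun k => hC.2.2.2.1 A hA _ (hgC k)
  have h0 : h 0 = 0 := by
    simp only [hh]
    have : g 0 = ∅ := rfl
    rw [this, Set.inter_empty, mu_empty_aux hC hμ]
  have hstep : ∀ k, h (k + 1) = h k + μ (A ∩ F' k) := by
    intro k
    have h1 : g (k + 1) = g k ∪ F' k := rfl
    have h2 : A ∩ g (k + 1) = (A ∩ g k) ∪ (A ∩ F' k) := by
      rw [h1, Set.inter_union_distrib_left]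
    have h3 : (A ∩ g k) ∩ (A ∩ F' k) = ∅ := by
      have hgf := hgF k k le_rfl
      ext x
      simp only [Set.mem_inter_iff, Set.mem_empty_iff_false, iff_false]
      rintro ⟨⟨_, hxg⟩, _, hxF⟩
      exact Set.eq_empty_iff_forall_notMem.1 hgf x ⟨hxg, hxF⟩
    simp only [hh]
    rw [h2]
    exact hμ.2.2 _ (hAgC k) _ (hC.2.2.2.1 A hA _ (hF'C k)) h3
  have hbound : ∀ k, μ (A ∩ F' k) < μ A / 2 := by
    intro k
    have := mu_mono_aux hC hμ (hF'C k) (hC.2.2.2.1 A hA _ (hF'C k))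
      Set.inter_subset_right
    linarith [hF's k]
  have hn : h n = μ A := by simp only [hh]; rw [hgU, Set.inter_univ]
  have hex : ∃ k, μ A / 2 ≤ h k := ⟨n, by rw [hn]; linarith⟩
  set k0 := Nat.find hex with hk0
  have hk0P : μ A / 2 ≤ h k0 := Nat.find_spec hex
  have hk0ne : k0 ≠ 0 := by
    intro hc
    rw [hc, h0] at hk0P; linarith
  obtain ⟨m, hm⟩ := Nat.exists_eq_succ_of_ne_zero hk0ne
  have hmlt : h m < μ A / 2 := by
    have := Nat.find_min hex (by omega : m < k0)
    linarith [not_le.1 this]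
  have hk0lt : h k0 < μ A := by
    rw [hm, hstep m]
    linarith [hbound m]
  -- now define B
  set B := A ∩ g k0 with hB
  have hBC : B ∈ C := hAgC k0
  have hBA : B ⊆ A := Set.inter_subset_left
  have hBpos : 0 < μ B := lt_of_lt_of_le (by linarith) hk0P
  have hDC : A ∩ Bᶜ ∈ C := hC.2.2.2.1 A hA _ (hC.2.2.2.2 B hBC)
  have hDval : μ (A ∩ Bᶜ) = μ A - μ B := mu_diff_aux hC hμ hA hBC hBA
  have hDpos : 0 < μ (A ∩ Bᶜ) := by rw [hDval]; linarith
  have hBne : B ≠ ∅ := by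
    intro hc; rw [hc, mu_empty_aux hC hμ] at hBpos; linarith
  have hDne : A ∩ Bᶜ ≠ ∅ := by
    intro hc; rw [hc, mu_empty_aux hC hμ] at hDpos; linarith
  refine ⟨fun b => if b then A ∩ Bᶜ else B, ?_, ?_, ?_, ?_⟩
  · intro b; cases b <;> simp [hBC, hDC]
  · intro b
    cases b <;> simp only [if_true, if_false, Bool.false_eq_true]
    · refine ⟨hBA, fun hc => hDne ?_⟩
      have : A ⊆ B := hc
      have : B = A := Set.Subset.antisymm hBA this
      rw [this]; simp
    · refine ⟨Set.inter_subset_left, fun hc => hBne ?_⟩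
      have hAc : A ⊆ A ∩ Bᶜ := hc
      have : B ⊆ Bᶜ := fun x hx => (hAc (hBA hx)).2
      ext x; simp only [Set.mem_empty_iff_false, iff_false]
      exact fun hx => (this hx) hx
  · intro b; cases b <;> simpa using (by assumption)
  · ext x; simp; tauto
end Aux

noncomputable def treeAuxFn {X : Type*} (C : Set (Set X)) (hC : IsBoolAlg C)
    (μ : Set X → ℝ) (hμ : IsFAP C μ) (hsc : StrongCont C μ) :
    List Bool → {A : Set X // A ∈ C ∧ 0 < μ A}
  | [] => ⟨Set.univ, hC.2.1, by rw [hμ.2.1]; norm_num⟩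
  | (b :: s) =>
    let P := treeAuxFn C hC μ hμ hsc s
    ⟨Classical.choose (exists_split_aux hC hμ hsc P.2.1 P.2.2) b,
      (Classical.choose_spec (exists_split_aux hC hμ hsc P.2.1 P.2.2)).1 b,
      (Classical.choose_spec (exists_split_aux hC hμ hsc P.2.1 P.2.2)).2.2.1 b⟩

lemma treeAuxFn_ssubset {X : Type*} (C : Set (Set X)) (hC : IsBoolAlg C)
    (μ : Set X → ℝ) (hμ : IsFAP C μ) (hsc : StrongCont C μ) (s : List Bool) (b : Bool) :
    (treeAuxFn C hC μ hμ hsc (b :: s)).1 ⊂ (treeAuxFn C hC μ hμ hsc s).1 := by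
  have := (Classical.choose_spec (exists_split_aux hC hμ hsc
    (treeAuxFn C hC μ hμ hsc s).2.1 (treeAuxFn C hC μ hμ hsc s).2.2)).2.1 b
  exact this

lemma treeAuxFn_disj {X : Type*} (C : Set (Set X)) (hC : IsBoolAlg C)
    (μ : Set X → ℝ) (hμ : IsFAP C μ) (hsc : StrongCont C μ) (s : List Bool) :
    (treeAuxFn C hC μ hμ hsc (false :: s)).1 ∩ (treeAuxFn C hC μ hμ hsc (true :: s)).1 = ∅ := by
  have := (Classical.choose_spec (exists_split_aux hC hμ hsc
    (treeAuxFn C hC μ hμ hsc s).2.1 (treeAuxFn C hC μ hμ hsc s).2.2)).2.2.2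
  exact this

lemma bool_trich : ∀ (s s' : List Bool), s <+: s' ∨ s' <+: s ∨
    ∃ p b b' q q', b ≠ b' ∧ s = p ++ b :: q ∧ s' = p ++ b' :: q' := by
  intro s
  induction s with
  | nil => intro s'; exact Or.inl List.nil_prefix
  | cons a u ih =>
    intro s'
    cases s' with
    | nil => exact Or.inr (Or.inl List.nil_prefix)
    | cons a' u' =>
      by_cases h : a = a'
      · subst h
        rcases ih u' with h1 | h1 | ⟨p, b, b', q, q', hbb, rfl, rfl⟩
        · exact Or.inl (List.cons_prefix_cons.2 ⟨rfl, h1⟩)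
        · exact Or.inr (Or.inl (List.cons_prefix_cons.2 ⟨rfl, h1⟩))
        · exact Or.inr (Or.inr ⟨a :: p, b, b', q, q', hbb, rfl, rfl⟩)
      · exact Or.inr (Or.inr ⟨[], a, a', u, u', h, rfl, rfl⟩)


/-- A strongly continuous finitely additive probability measure on
a Boolean algebra of sets yields a 2-tree all of whose nodes have positive
measure. -/
theorem strongCont_gives_two_tree {X : Type*} (C : Set (Set X)) (hC : IsBoolAlg C)
    (μ : Set X → ℝ) (hμ : IsFAP C μ) (hsc : StrongCont C μ) :
    ∃ t : List Bool → Set X, IsTwoTree C t ∧ ∀ s : List Bool, 0 < μ (t s) := by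
  set f := treeAuxFn C hC μ hμ hsc with hf
  have hss : ∀ s b, (f (b :: s)).1 ⊂ (f s).1 := fun s b => treeAuxFn_ssubset C hC μ hμ hsc s b
  have hdj : ∀ s, (f (false :: s)).1 ∩ (f (true :: s)).1 = ∅ :=
    fun s => treeAuxFn_disj C hC μ hμ hsc s
  have hmono : ∀ u r : List Bool, (f (u ++ r)).1 ⊆ (f r).1 := by
    intro u
    induction u with
    | nil => intro r; exact subset_rfl
    | cons a u ih => intro r; exact ((hss (u ++ r) a).1).trans (ih r)
  have hstrict : ∀ u r : List Bool, u ≠ [] → (f (u ++ r)).1 ⊂ (f r).1 := by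
    rintro (_ | ⟨a, u⟩) r hu
    · exact absurd rfl hu
    · exact lt_of_lt_of_le (hss (u ++ r) a) (hmono u r)
  have hne : ∀ s, (f s).1 ≠ ∅ := by
    intro s hc
    have := (f s).2.2
    rw [hc, mu_empty_aux hC hμ] at this
    linarith
  have hdj2 : ∀ (r : List Bool) (b b' : Bool), b ≠ b' →
      (f (b :: r)).1 ∩ (f (b' :: r)).1 = ∅ := by
    intro r b b' hbb
    cases b <;> cases b'
    · exact absurd rfl hbb
    · exact hdj r
    · rw [Set.inter_comm]; exact hdj r
    · exact absurd rfl hbb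
  refine ⟨fun s => (f s.reverse).1, ⟨?_, fun s => (f s.reverse).2.1, ?_, ?_⟩,
    fun s => (f s.reverse).2.2⟩
  · -- injectivity
    intro s s' h
    simp only at h
    by_contra hne'
    have strictT : ∀ a a' : List Bool, a <+: a' → a ≠ a' → (f a'.reverse).1 ⊂ (f a.reverse).1 := by
      rintro a a' ⟨r, rfl⟩ hner
      have hr : r ≠ [] := by rintro rfl; simp at hner
      rw [List.reverse_append]
      exact hstrict r.reverse a.reverse (by simpa using hr)
    rcases bool_trich s s' with h1 | h1 | ⟨p, b, b', q, q', hbb, rfl, rfl⟩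
    · exact (strictT s s' h1 hne').ne' h
    · exact (strictT s' s h1 (Ne.symm hne')).ne' h.symm
    · have e1 : (p ++ b :: q).reverse = q.reverse ++ b :: p.reverse := by simp
      have e2 : (p ++ b' :: q').reverse = q'.reverse ++ b' :: p.reverse := by simp
      have hs1 : (f (p ++ b :: q).reverse).1 ⊆ (f (b :: p.reverse)).1 := by
        rw [e1]; exact hmono q.reverse (b :: p.reverse)
      have hs2 : (f (p ++ b' :: q').reverse).1 ⊆ (f (b' :: p.reverse)).1 := by
        rw [e2]; exact hmono q'.reverse (b' :: p.reverse)
      have : (f (p ++ b :: q).reverse).1 = ∅ := by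
        have hd := hdj2 p.reverse b b' hbb
        apply Set.eq_empty_iff_forall_notMem.2
        intro x hx
        have hx' : x ∈ (f (p ++ b' :: q').reverse).1 := h ▸ hx
        exact Set.eq_empty_iff_forall_notMem.1 hd x ⟨hs1 hx, hs2 hx'⟩
      exact hne _ this
  · intro s b
    show (f (s ++ [b]).reverse).1 ⊂ (f s.reverse).1
    have e : (s ++ [b]).reverse = b :: s.reverse := by simp
    rw [e]
    exact hss s.reverse b
  · intro s
    show (f (s ++ [false]).reverse).1 ∩ (f (s ++ [true]).reverse).1 = ∅
    have e1 : (s ++ [false]).reverse = false :: s.reverse := by simp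
    have e2 : (s ++ [true]).reverse = true :: s.reverse := by simp
    rw [e1, e2]
    exact hdj s.reverse
end

section
/- Let X and Y be sets and R ⊆ X × Y a relation whose indicator χ_R has the double limit property. Let μ be a finitely additive probability measure on C_X(R) given by μ(A) = ∑_{i∈I, A∈U_i} r_i for pairwise distinct ultrafilters (U_i)_{i∈I} on C_X(R) and positive reals r_i with ∑_{i∈I} r_i = 1 (I ⊆ ℕ), and let ν be a finitely additive probability measure on C_Y(R) given by ν(B) = ∑_{j∈J, B∈V_j} s_j for pairwise distinct ultrafilters (V_j)_{j∈J} on C_Y(R) and positive reals s_j with ∑_{j∈J} s_j = 1 (J ⊆ ℕ). Then every set d_{U_i} belongs to C_Y(R), every set e_{V_j} belongs to C_X(R), and the Morley product commutes: ∑_{i∈I} r_i · ν(d_{U_i}) = ∑_{j∈J} s_j · μ(e_{V_j}). -/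
open Filter Topology

/-!
If `d_U` were not a finite Boolean combination of rows, or if `d_U ∈ V` while `e_V ∉ U`, then,
since ultrafilters are closed under finite intersections, one could choose points one at a time
to get sequences `aᵢ`, `bⱼ` on which `χ_R` takes one value above the diagonal and the other below
it (in the first case after an infinite Ramsey extraction). The two iterated limits along such
sequences differ, contradicting the double limit property. Hence `d_U ∈ C_Y(R)`, `e_V ∈ C_X(R)`
and `d_U ∈ V ↔ e_V ∈ U`, and the Morley identity is Fubini for the nonnegative double series
`∑ rᵢ sⱼ [d_{Uᵢ} ∈ Vⱼ]`.
-/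

theorem exists_strictMono_of_eventually_hyperfilter {q : ℕ → ℕ → Prop}
    (h : ∀ᶠ i in (hyperfilter ℕ : Filter ℕ), ∀ᶠ j in (hyperfilter ℕ : Filter ℕ), q i j) :
    ∃ g : ℕ → ℕ, StrictMono g ∧ ∀ k l, k < l → q (g k) (g l) := by
  obtain ⟨g, -, hg⟩ := exists_seq_of_forall_finset_exists
    (fun i => ∀ᶠ j in (hyperfilter ℕ : Filter ℕ), q i j) (fun m n => m < n ∧ q m n)
    fun s hs => (h.and ((eventually_all_finset s).2 fun m hm =>
      ((eventually_gt_atTop m).filter_mono Nat.hyperfilter_le_atTop).and (hs m hm))).exists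
  exact ⟨g, fun k l hkl => (hg k l hkl).1, fun k l hkl => (hg k l hkl).2⟩

theorem exists_strictMono_homogeneous (c : ℕ → ℕ → Prop) :
    ∃ g : ℕ → ℕ, StrictMono g ∧
      ((∀ k l, k < l → c (g k) (g l)) ∨ ∀ k l, k < l → ¬ c (g k) (g l)) := by
  by_cases hc : ∀ᶠ i in (hyperfilter ℕ : Filter ℕ), ∀ᶠ j in (hyperfilter ℕ : Filter ℕ), c i j
  · obtain ⟨g, hg, hgc⟩ := exists_strictMono_of_eventually_hyperfilter hc
    exact ⟨g, hg, .inl hgc⟩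
  · simp only [← Ultrafilter.eventually_not] at hc
    obtain ⟨g, hg, hgc⟩ := exists_strictMono_of_eventually_hyperfilter hc
    exact ⟨g, hg, .inr hgc⟩

section Ladder

variable {α β : Type*} {F : Filter α} {G : Filter β} {p : α → β → Prop}

theorem exists_ladder_of_eventually [F.NeBot] [G.NeBot]
    (hpos : ∀ᶠ b in G, ∀ᶠ a in F, p a b) (hneg : ∀ᶠ a in F, ∀ᶠ b in G, ¬ p a b) :
    ∃ (a : ℕ → α) (b : ℕ → β), ∀ i j, p (a i) (b j) ↔ j < i := by
  obtain ⟨t, ht, htt⟩ := exists_seq_of_forall_finset_exists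
    (fun t : α × β => (∀ᶠ b in G, ¬ p t.1 b) ∧ (∀ᶠ a in F, p a t.2) ∧ ¬ p t.1 t.2)
    (fun t t' => p t'.1 t.2 ∧ ¬ p t.1 t'.2) fun s hs => by
      obtain ⟨a, ha, has⟩ := (hneg.and ((eventually_all_finset s).2 fun t ht =>
        (hs t ht).2.1)).exists
      obtain ⟨b, hb, hab, hsb⟩ := (hpos.and (ha.and ((eventually_all_finset s).2 fun t ht =>
        (hs t ht).1))).exists
      exact ⟨(a, b), ⟨ha, hb, hab⟩, fun t ht => ⟨has t ht, hsb t ht⟩⟩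
  refine ⟨fun n => (t n).1, fun n => (t n).2, fun i j => ?_⟩
  rcases lt_trichotomy i j with hij | rfl | hji
  · exact iff_of_false (htt i j hij).2 hij.not_gt
  · exact iff_of_false (ht i).2.2 (lt_irrefl i)
  · exact iff_of_true (htt j i hji).1 hji

theorem exists_splitting_seq_of_not_determined [F.NeBot]
    (h : ∀ s : Finset α, ∃ b b', (∀ a ∈ s, p a b ↔ p a b') ∧
      (∀ᶠ a in F, p a b) ∧ ∀ᶠ a in F, ¬ p a b') :
    ∃ (a : ℕ → α) (b b' : ℕ → β), (∀ i j, i < j → (p (a i) (b j) ↔ p (a i) (b' j))) ∧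
      ∀ i j, j ≤ i → p (a i) (b j) ∧ ¬ p (a i) (b' j) := by
  classical
  obtain ⟨t, ht, htt⟩ := exists_seq_of_forall_finset_exists
    (fun t : α × β × β =>
      (∀ᶠ a in F, p a t.2.1) ∧ (∀ᶠ a in F, ¬ p a t.2.2) ∧ p t.1 t.2.1 ∧ ¬ p t.1 t.2.2)
    (fun t t' => (p t.1 t'.2.1 ↔ p t.1 t'.2.2) ∧ p t'.1 t.2.1 ∧ ¬ p t'.1 t.2.2)
    fun s hs => by
      obtain ⟨b, b', hbb', hb, hb'⟩ := h (s.image Prod.fst)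
      obtain ⟨a, hab, hab', has⟩ := (hb.and (hb'.and ((eventually_all_finset s).2 fun t ht =>
        (hs t ht).1.and (hs t ht).2.1))).exists
      exact ⟨(a, b, b'), ⟨hb, hb', hab, hab'⟩,
        fun t ht => ⟨hbb' t.1 (Finset.mem_image_of_mem _ ht), has t ht⟩⟩
  refine ⟨fun n => (t n).1, fun n => (t n).2.1, fun n => (t n).2.2,
    fun i j hij => (htt i j hij).1, fun i j hji => ?_⟩
  rcases hji.eq_or_lt with rfl | hji
  · exact (ht j).2.2
  · exact (htt j i hji).2

end Ladder

namespace DLP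

variable {A B : Type*}

theorem flip {f : A → B → ℝ} (h : DLP f) : DLP fun b a => f a b :=
  fun a b u v L L' hu hL hv hL' => (h b a v u L' L hv hL' hu hL).symm

theorem eq_of_upper_of_lower {f : A → B → ℝ} (h : DLP f) {a : ℕ → A} {b : ℕ → B} {c d : ℝ}
    (hup : ∀ i j, i < j → f (a i) (b j) = c) (hlo : ∀ i j, j < i → f (a i) (b j) = d) :
    c = d :=
  h a b (fun _ => c) (fun _ => d) c d
    (fun i => tendsto_const_nhds.congr'
      ((eventually_gt_atTop i).mono fun j hj => (hup i j hj).symm))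
    tendsto_const_nhds
    (fun j => tendsto_const_nhds.congr'
      ((eventually_gt_atTop j).mono fun i hi => (hlo i j hi).symm))
    tendsto_const_nhds

theorem upper_iff_lower_of_chi {R : Set (A × B)} (h : DLP (chi R)) {a : ℕ → A} {b : ℕ → B}
    {P Q : Prop} (hup : ∀ i j, i < j → ((a i, b j) ∈ R ↔ P))
    (hlo : ∀ i j, j < i → ((a i, b j) ∈ R ↔ Q)) : P ↔ Q := by
  classical
  have hPQ := h.eq_of_upper_of_lower (a := a) (b := b)
    (c := if P then 1 else 0) (d := if Q then 1 else 0)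
    (fun i j hij => by simp [chi, hup i j hij]) (fun i j hji => by simp [chi, hlo i j hji])
  by_cases hP : P <;> by_cases hQ : Q <;> simp_all

/-- After a Ramsey extraction, either `b'` or `b` gives a ladder. -/
theorem false_of_chi_splitting_seq {R : Set (A × B)} (h : DLP (chi R)) {a : ℕ → A} {b b' : ℕ → B}
    (hup : ∀ i j, i < j → ((a i, b j) ∈ R ↔ (a i, b' j) ∈ R))
    (hlo : ∀ i j, j ≤ i → (a i, b j) ∈ R ∧ (a i, b' j) ∉ R) : False := by
  obtain ⟨g, hg, hpos | hneg⟩ := exists_strictMono_homogeneous fun i j => (a i, b j) ∈ R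
  · exact (h.upper_iff_lower_of_chi (a := a ∘ g) (b := b' ∘ g) (P := True) (Q := False)
      (fun k l hkl => iff_true_intro ((hup _ _ (hg hkl)).1 (hpos k l hkl)))
      (fun k l hlk => iff_false_intro (hlo _ _ (hg hlk).le).2)).1 trivial
  · exact (h.upper_iff_lower_of_chi (a := a ∘ g) (b := b ∘ g) (P := False) (Q := True)
      (fun k l hkl => iff_false_intro (hneg k l hkl))
      (fun k l hlk => iff_true_intro (hlo _ _ (hg hlk).le).1)).2 trivial

end DLP

namespace IsUltraOn

variable {X : Type*} {C U : Set (Set X)}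

def toFilter (hU : IsUltraOn C U) : Filter X where
  sets := {S | ∃ A ∈ U, A ⊆ S}
  univ_sets := ⟨Set.univ, hU.2.2.1, subset_rfl⟩
  sets_of_superset := fun ⟨A, hA, hAS⟩ hST => ⟨A, hA, hAS.trans hST⟩
  inter_sets := fun ⟨A, hA, hAS⟩ ⟨B, hB, hBT⟩ =>
    ⟨A ∩ B, hU.2.2.2.1 A hA B hB, Set.inter_subset_inter hAS hBT⟩

instance (hU : IsUltraOn C U) : hU.toFilter.NeBot :=
  forall_mem_nonempty_iff_neBot.mp fun _ ⟨_, hA, hAS⟩ =>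
    (Set.nonempty_iff_ne_empty.2 fun hA0 => hU.2.1 (hA0 ▸ hA)).mono hAS

theorem mem_toFilter (hU : IsUltraOn C U) {A : Set X} (hA : A ∈ U) : A ∈ hU.toFilter :=
  ⟨A, hA, subset_rfl⟩

theorem compl_mem (hU : IsUltraOn C U) {A : Set X} (hA : A ∈ C) (h : A ∉ U) : Aᶜ ∈ U :=
  (hU.2.2.2.2.2 A hA).resolve_left h

end IsUltraOn

theorem isSetAlgebra_genAlg {X : Type*} (S : Set (Set X)) :
    MeasureTheory.IsSetAlgebra (genAlg S) where
  empty_mem := fun _ hC => hC.1.1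
  compl_mem := fun A hA C hC => hC.1.2.2.2.2 A (hA C hC)
  union_mem := fun A B hA hB C hC => hC.1.2.2.1 A (hA C hC) B (hB C hC)

section Definability

variable {X Y : Type*} {R : Set (X × Y)}

theorem col_mem_colAlg (R : Set (X × Y)) (b : Y) : {x : X | (x, b) ∈ R} ∈ colAlg R :=
  fun _ hC => hC.2 ⟨b, rfl⟩

theorem row_mem_rowAlg (R : Set (X × Y)) (a : X) : {y : Y | (a, y) ∈ R} ∈ rowAlg R :=
  fun _ hC => hC.2 ⟨a, rfl⟩

/-- A set determined by the rows through finitely many points is a union of finitely many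
atoms of the algebra they generate. -/
theorem mem_rowAlg_of_determined {D : Set Y} (l : Finset X)
    (hD : ∀ b b', (∀ a ∈ l, (a, b) ∈ R ↔ (a, b') ∈ R) → b ∈ D → b' ∈ D) : D ∈ rowAlg R := by
  classical
  have hC : MeasureTheory.IsSetAlgebra (rowAlg R) := isSetAlgebra_genAlg _
  let cell : Finset X → Set Y := fun T => ⋂ a ∈ l, {y | (a, y) ∈ R ↔ a ∈ T}
  have hcell : ∀ T, cell T ∈ rowAlg R := fun T =>
    hC.biInter_mem l fun a _ => by
      by_cases ha : a ∈ T
      · simpa only [ha, iff_true] using row_mem_rowAlg R a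
      · simp only [ha, iff_false]
        exact hC.compl_mem (row_mem_rowAlg R a)
  have hD_eq : D = ⋃ T ∈ l.powerset.filter (fun T => cell T ⊆ D), cell T := by
    refine subset_antisymm (fun b hb => ?_) (Set.iUnion₂_subset fun T hT => ?_)
    · refine Set.mem_biUnion (x := l.filter fun a => (a, b) ∈ R) ?_ ?_
      · refine Finset.mem_filter.2 ⟨Finset.mem_powerset.2 (Finset.filter_subset _ _), ?_⟩
        refine fun b' hb' => hD b b' (fun a ha => ?_) hb
        simpa [ha] using (Set.mem_iInter₂.1 hb' a ha).symm
      · simp +contextual [cell]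
    · exact (Finset.mem_filter.1 hT).2
  rw [hD_eq]
  exact hC.biUnion_mem _ fun T _ => hcell T

theorem dSet_mem_rowAlg (h : DLP (chi R)) {U : Set (Set X)} (hU : IsUltraOn (colAlg R) U) :
    dSet R U ∈ rowAlg R := by
  by_contra hD
  have hsep : ∀ l : Finset X, ∃ b b', (∀ a ∈ l, (a, b) ∈ R ↔ (a, b') ∈ R) ∧
      (∀ᶠ a in hU.toFilter, (a, b) ∈ R) ∧ ∀ᶠ a in hU.toFilter, (a, b') ∉ R := by
    intro l
    obtain ⟨b, b', hbb', hb, hb'⟩ : ∃ b b', (∀ a ∈ l, (a, b) ∈ R ↔ (a, b') ∈ R) ∧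
        b ∈ dSet R U ∧ b' ∉ dSet R U := by
      by_contra! H
      exact hD (mem_rowAlg_of_determined l H)
    exact ⟨b, b', hbb', hU.mem_toFilter hb,
      hU.mem_toFilter (hU.compl_mem (col_mem_colAlg R b') hb')⟩
  obtain ⟨a, b, b', hup, hlo⟩ := exists_splitting_seq_of_not_determined hsep
  exact h.false_of_chi_splitting_seq hup hlo

theorem eSet_mem_colAlg (h : DLP (chi R)) {V : Set (Set Y)} (hV : IsUltraOn (rowAlg R) V) :
    eSet R V ∈ colAlg R :=
  dSet_mem_rowAlg (R := Prod.swap ⁻¹' R) h.flip hV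

theorem eSet_mem_of_dSet_mem (h : DLP (chi R)) {U : Set (Set X)} {V : Set (Set Y)}
    (hU : IsUltraOn (colAlg R) U) (hV : IsUltraOn (rowAlg R) V) (hd : dSet R U ∈ V) :
    eSet R V ∈ U := by
  by_contra he
  obtain ⟨a, b, hab⟩ := exists_ladder_of_eventually (F := hU.toFilter) (G := hV.toFilter)
    (p := fun x y => (x, y) ∈ R)
    (mem_of_superset (hV.mem_toFilter hd) fun b hb => hU.mem_toFilter hb)
    (mem_of_superset (hU.mem_toFilter (hU.compl_mem (eSet_mem_colAlg h hV) he)) fun a ha =>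
      hV.mem_toFilter (hV.compl_mem (row_mem_rowAlg R a) ha))
  exact (h.upper_iff_lower_of_chi (P := False) (Q := True)
    (fun i j hij => (hab i j).trans (iff_of_false hij.not_gt id))
    (fun i j hji => (hab i j).trans (iff_of_true hji trivial))).2 trivial

theorem dSet_mem_iff_eSet_mem (h : DLP (chi R)) {U : Set (Set X)} {V : Set (Set Y)}
    (hU : IsUltraOn (colAlg R) U) (hV : IsUltraOn (rowAlg R) V) :
    dSet R U ∈ V ↔ eSet R V ∈ U :=
  ⟨eSet_mem_of_dSet_mem h hU hV, eSet_mem_of_dSet_mem (R := Prod.swap ⁻¹' R) h.flip hV hU⟩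

end Definability

section Fubini

variable {ι κ : Type*} {I : Set ι} {J : Set κ} {r : ι → ℝ} {s : κ → ℝ}

theorem tsum_subtype_mul_tsum_subtype_eq (P : ι → κ → Prop) :
    ∑' i : I, r i * ∑' j : {j // j ∈ J ∧ P i j}, s j =
      ∑' i, ∑' j, I.indicator r i * {j | j ∈ J ∧ P i j}.indicator s j := by
  refine (tsum_subtype I fun i => r i * ∑' j : {j // j ∈ J ∧ P i j}, s j).trans
    (tsum_congr fun i => ?_)
  by_cases hi : i ∈ I
  · simp only [Set.indicator_of_mem hi, tsum_mul_left]
    exact congrArg _ (tsum_subtype {j | j ∈ J ∧ P i j} s)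
  · simp [Set.indicator_of_notMem hi]

theorem tsum_subtype_mul_tsum_subtype_comm (hr : ∀ i ∈ I, 0 ≤ r i) (hs : ∀ j ∈ J, 0 ≤ s j)
    (hr' : Summable fun i : I => r i) (hs' : Summable fun j : J => s j) (P : ι → κ → Prop) :
    ∑' i : I, r i * ∑' j : {j // j ∈ J ∧ P i j}, s j =
      ∑' j : J, s j * ∑' i : {i // i ∈ I ∧ P i j}, r i := by
  classical
  let F : ι → κ → ℝ := fun i j => if i ∈ I ∧ j ∈ J ∧ P i j then r i * s j else 0
  have hF : Summable (Function.uncurry F) := by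
    refine (Summable.mul_of_nonneg (summable_subtype_iff_indicator.1 hr')
      (summable_subtype_iff_indicator.1 hs') (Set.indicator_nonneg hr)
      (Set.indicator_nonneg hs)).of_nonneg_of_le (fun p => ?_) (fun p => ?_)
    · simp only [Function.uncurry, F]
      split_ifs with hp
      exacts [mul_nonneg (hr _ hp.1) (hs _ hp.2.1), le_rfl]
    · simp only [Function.uncurry, F]
      split_ifs with hp
      · simp [hp.1, hp.2.1]
      · exact mul_nonneg (Set.indicator_nonneg hr _) (Set.indicator_nonneg hs _)
  rw [tsum_subtype_mul_tsum_subtype_eq, tsum_subtype_mul_tsum_subtype_eq fun j i => P i j]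
  calc _ = ∑' i, ∑' j, F i j := by
          refine tsum_congr fun i => tsum_congr fun j => ?_
          simp only [Set.indicator, F]
          split_ifs <;> simp_all
    _ = ∑' j, ∑' i, F i j := hF.tsum_comm.symm
    _ = _ := by
          refine tsum_congr fun j => tsum_congr fun i => ?_
          simp only [Set.indicator, F]
          split_ifs <;> simp_all [mul_comm]

end Fubini

theorem morley_product_commutes_general {X Y : Type*} (R : Set (X × Y)) (h : DLP (chi R))
    (μ : Set X → ℝ) (ν : Set Y → ℝ)
    (I J : Set ℕ) (U : ℕ → Set (Set X)) (V : ℕ → Set (Set Y)) (r s : ℕ → ℝ)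
    (hU : ∀ i ∈ I, IsUltraOn (colAlg R) (U i))
    (hr : ∀ i ∈ I, 0 < r i)
    (hrsum : HasSum (fun i : I => r (i : ℕ)) 1)
    (hμeq : ∀ A ∈ colAlg R, μ A = ∑' i : {i : ℕ // i ∈ I ∧ A ∈ U i}, r (i : ℕ))
    (hV : ∀ j ∈ J, IsUltraOn (rowAlg R) (V j))
    (hs : ∀ j ∈ J, 0 < s j)
    (hssum : HasSum (fun j : J => s (j : ℕ)) 1)
    (hνeq : ∀ B ∈ rowAlg R, ν B = ∑' j : {j : ℕ // j ∈ J ∧ B ∈ V j}, s (j : ℕ)) :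
    (∀ i ∈ I, dSet R (U i) ∈ rowAlg R) ∧
    (∀ j ∈ J, eSet R (V j) ∈ colAlg R) ∧
    ∑' i : I, r (i : ℕ) * ν (dSet R (U (i : ℕ))) =
      ∑' j : J, s (j : ℕ) * μ (eSet R (V (j : ℕ))) := by
  have hd : ∀ i ∈ I, dSet R (U i) ∈ rowAlg R := fun i hi => dSet_mem_rowAlg h (hU i hi)
  have he : ∀ j ∈ J, eSet R (V j) ∈ colAlg R := fun j hj => eSet_mem_colAlg h (hV j hj)
  refine ⟨hd, he, ?_⟩
  calc ∑' i : I, r i * ν (dSet R (U i))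
      = ∑' i : I, r i * ∑' j : {j // j ∈ J ∧ dSet R (U i) ∈ V j}, s j :=
        tsum_congr fun i => by rw [hνeq _ (hd i i.2)]
    _ = ∑' j : J, s j * ∑' i : {i // i ∈ I ∧ dSet R (U i) ∈ V j}, r i :=
        tsum_subtype_mul_tsum_subtype_comm (fun i hi => (hr i hi).le) (fun j hj => (hs j hj).le)
          hrsum.summable hssum.summable fun i j => dSet R (U i) ∈ V j
    _ = ∑' j : J, s j * μ (eSet R (V j)) := tsum_congr fun j => by
        rw [hμeq _ (he j j.2)]
        exact congrArg _ ((Equiv.subtypeEquivRight fun i => and_congr_right fun hi =>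
          dSet_mem_iff_eSet_mem h (hU i hi) (hV j j.2)).tsum_eq fun i => r i)

/-- commutativity of the Morley product for measures decomposed as
weighted sums of ultrafilters, when the indicator of `R` has the double limit
property. -/
theorem morley_product_commutes {X Y : Type*} (R : Set (X × Y)) (h : DLP (chi R))
    (μ : Set X → ℝ) (ν : Set Y → ℝ)
    (hμ : IsFAP (colAlg R) μ) (hν : IsFAP (rowAlg R) ν)
    (I J : Set ℕ) (U : ℕ → Set (Set X)) (V : ℕ → Set (Set Y)) (r s : ℕ → ℝ)
    (hU : ∀ i ∈ I, IsUltraOn (colAlg R) (U i))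
    (hUdist : ∀ i ∈ I, ∀ j ∈ I, i ≠ j → U i ≠ U j)
    (hr : ∀ i ∈ I, 0 < r i)
    (hrsum : HasSum (fun i : I => r (i : ℕ)) 1)
    (hμeq : ∀ A ∈ colAlg R, μ A = ∑' i : {i : ℕ // i ∈ I ∧ A ∈ U i}, r (i : ℕ))
    (hV : ∀ j ∈ J, IsUltraOn (rowAlg R) (V j))
    (hVdist : ∀ i ∈ J, ∀ j ∈ J, i ≠ j → V i ≠ V j)
    (hs : ∀ j ∈ J, 0 < s j)
    (hssum : HasSum (fun j : J => s (j : ℕ)) 1)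
    (hνeq : ∀ B ∈ rowAlg R, ν B = ∑' j : {j : ℕ // j ∈ J ∧ B ∈ V j}, s (j : ℕ)) :
    (∀ i ∈ I, dSet R (U i) ∈ rowAlg R) ∧
    (∀ j ∈ J, eSet R (V j) ∈ colAlg R) ∧
    ∑' i : I, r (i : ℕ) * ν (dSet R (U (i : ℕ))) =
      ∑' j : J, s (j : ℕ) * μ (eSet R (V (j : ℕ))) :=
  morley_product_commutes_general R h μ ν I J U V r s hU hr hrsum hμeq hV hs hssum hνeq
end

section
/- Let X and Y be sets and f : X × Y → [0,1]. Then f has the double limit property if and only if f_c : conv_δ(X) × conv_δ(Y) → [0,1] has the double limit property. -/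
open Filter Topology

/-!
Restricting `f_c` to Dirac masses recovers `f`, so only the forward direction needs work, and
since `f_c(p, q) = ∑ₓ p(x) ∑_y q(y) f(x, y)` it suffices to average one variable at a time.
Suppose points `aᵢ` and weights `qⱼ` have iterated limits `L < L'`. Along a subsequence
`f(aᵢ, ·)` converges to some `g` on the countable union of the supports, and then for
`γ = (L' - L) / 4` each set `Bᵢ = {γ < g - f(aᵢ, ·)}` carries `qⱼ`-mass at least `γ` for large
`j`. A compactness argument in Cantor space produces infinitely many indices whose `Bᵢ` have
finite intersections meeting the supports; points `y_l` of these intersections satisfy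
`f(aᵢ, y_l) + γ ≤ g(y_l)` for `i ≤ l`, against the double limit property of `f`.
-/

open MeasureTheory Set
open scoped NNReal ENNReal

theorem abs_le_one_of_mem_Icc {r : ℝ} (hr : r ∈ Icc (0 : ℝ) 1) : |r| ≤ 1 :=
  abs_le.2 ⟨by linarith [hr.1], hr.2⟩

namespace DLP

variable {A B : Type*} {f : A → B → ℝ}

theorem flip_s7 (h : DLP f) : DLP (Function.swap f) :=
  fun a b u v L L' hu huL hv hvL => (h b a v u L' L hv hvL hu huL).symm

theorem comp {A' B' : Type*} (h : DLP f) (α : A' → A) (β : B' → B) :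
    DLP fun a b => f (α a) (β b) :=
  fun a b => h (α ∘ a) (β ∘ b)

theorem const_sub (h : DLP f) (c : ℝ) : DLP fun a b => c - f a b := by
  intro a b u v L L' hu huL hv hvL
  have := h a b (c - u ·) (c - v ·) (c - L) (c - L')
    (fun i => by simpa using (hu i).const_sub c) (huL.const_sub c)
    (fun j => by simpa using (hv j).const_sub c) (hvL.const_sub c)
  linarith

end DLP

theorem exists_strictMono_forall_tendsto {ι : Type*} [Countable ι] (F : ι → ℕ → ℝ)
    (hF : ∀ i k, F i k ∈ Icc (0 : ℝ) 1) :
    ∃ φ : ℕ → ℕ, StrictMono φ ∧ ∃ c : ι → ℝ,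
      ∀ i, c i ∈ Icc (0 : ℝ) 1 ∧ Tendsto (fun k => F i (φ k)) atTop (𝓝 (c i)) := by
  obtain ⟨c, hc, φ, hφ, hlim⟩ := (isCompact_univ_pi fun _ : ι => isCompact_Icc).tendsto_subseq
    (x := fun k i => F i k) fun k i _ => hF i k
  exact ⟨φ, hφ, c, fun i => ⟨hc i trivial, (continuous_apply i).continuousAt.tendsto.comp hlim⟩⟩

theorem exists_strictMono_tendsto_on_countable {Y : Type*} {S : Set Y} (hS : S.Countable)
    (F : ℕ → Y → ℝ) (hF : ∀ k y, F k y ∈ Icc (0 : ℝ) 1) :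
    ∃ φ : ℕ → ℕ, StrictMono φ ∧ ∃ g : Y → ℝ, (∀ y, g y ∈ Icc (0 : ℝ) 1) ∧
      ∀ y ∈ S, Tendsto (fun k => F (φ k) y) atTop (𝓝 (g y)) := by
  classical
  have := hS.to_subtype
  obtain ⟨φ, hφ, c, hc⟩ := exists_strictMono_forall_tendsto (fun (y : S) k => F k y)
    fun y k => hF k y
  refine ⟨φ, hφ, fun y => if h : y ∈ S then c ⟨y, h⟩ else 0, fun y => ?_, fun y hy => ?_⟩
  · by_cases h : y ∈ S
    · simpa [dif_pos h] using (hc ⟨y, h⟩).1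
    · simp [dif_neg h]
  · simpa [dif_pos hy] using (hc ⟨y, hy⟩).2

theorem DLP.false_of_gap {A B : Type*} {f : A → B → ℝ} (hf : ∀ a b, f a b ∈ Icc (0 : ℝ) 1)
    (h : DLP f) (a : ℕ → A) (b : ℕ → B) (g : ℕ → ℝ)
    (hcol : ∀ l, Tendsto (fun i => f (a i) (b l)) atTop (𝓝 (g l)))
    {γ : ℝ} (hγ : 0 < γ) (hgap : ∀ i l, i ≤ l → f (a i) (b l) + γ ≤ g l) : False := by
  have hg : ∀ l, g l ∈ Icc (0 : ℝ) 1 := fun l =>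
    isClosed_Icc.mem_of_tendsto (hcol l) (Eventually.of_forall fun i => hf _ _)
  obtain ⟨ψ₁, hψ₁, w, hw⟩ := exists_strictMono_forall_tendsto (fun k l => f (a k) (b l))
    fun k l => hf _ _
  obtain ⟨Φ, -, ψ₂, hψ₂, hΦ⟩ := isCompact_Icc.tendsto_subseq fun l => hg (ψ₁ l)
  set ψ := ψ₁ ∘ ψ₂
  have hrow : ∀ k, Tendsto (fun l => f (a k) (b (ψ l))) atTop (𝓝 (w k)) := fun k =>
    (hw k).2.comp hψ₂.tendsto_atTop
  have hwΦ : ∀ k, w k ≤ Φ - γ := fun k => by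
    refine le_of_tendsto_of_tendsto (hrow k) (hΦ.sub_const γ) ?_
    filter_upwards [eventually_ge_atTop k] with l hl
    show f (a k) (b (ψ l)) ≤ g (ψ l) - γ
    linarith [hgap k (ψ l) (hl.trans (hψ₁.comp hψ₂).le_apply)]
  obtain ⟨W, -, φ, hφ, hW⟩ := isCompact_Icc.tendsto_subseq fun k => (hw k).1
  have hWΦ : W ≤ Φ - γ := le_of_tendsto' hW fun k => hwΦ (φ k)
  have := h (a ∘ φ) (b ∘ ψ) (w ∘ φ) (g ∘ ψ) W Φ (fun k => hrow (φ k)) hW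
    (fun l => (hcol (ψ l)).comp hφ.tendsto_atTop) hΦ
  linarith

theorem le_measure_setOf_frequently_mem {Ω : Type*} [MeasurableSpace Ω] (μ : Measure Ω)
    [IsFiniteMeasure μ] {s : ℕ → Set Ω} (hs : ∀ n, MeasurableSet (s n)) {c : ℝ≥0∞}
    (h : ∀ n, c ≤ μ (s n)) : c ≤ μ {ω | ∃ᶠ n in atTop, ω ∈ s n} := by
  have hset : {ω | ∃ᶠ n in atTop, ω ∈ s n} = ⋂ N, ⋃ n ≥ N, s n := by
    ext ω
    simp [frequently_atTop]
  have hanti : Antitone fun N => ⋃ n ≥ N, s n := fun N M hNM =>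
    biUnion_subset_biUnion_left fun n hn => le_trans hNM hn
  rw [hset, hanti.measure_iInter (fun N => (MeasurableSet.biUnion (to_countable _)
    fun n _ => hs n).nullMeasurableSet) ⟨0, measure_ne_top _ _⟩]
  exact le_iInf fun N => (h N).trans (measure_mono (subset_biUnion_of_mem (le_refl N)))

/-- Code `y` by the point `(y ∈ B i)ᵢ` of Cantor space. A weak limit `ν` of the image measures
gives mass `≥ γ` to each clopen cylinder `{ω i = true}`, so a set of positive `ν`-measure of points
lies in infinitely many of them; take such a point outside the countably many `ν`-null cylinders. -/
theorem exists_infinite_forall_measure_biInter_pos {Y : Type*} [MeasurableSpace Y]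
    (μ : ℕ → ProbabilityMeasure Y) {B : ℕ → Set Y} (hB : ∀ i, MeasurableSet (B i))
    {γ : ℝ≥0} (hγ : 0 < γ) (hμB : ∀ i, ∀ᶠ m in atTop, γ ≤ μ m (B i)) :
    ∃ M : Set ℕ, M.Infinite ∧ ∀ T : Finset ℕ, ↑T ⊆ M → ∃ m, 0 < μ m (⋂ i ∈ T, B i) := by
  classical
  let π : Y → ℕ → Bool := fun y i => decide (y ∈ B i)
  have hπ : Measurable π := measurable_pi_lambda _ fun i => measurable_to_bool <| by
    convert hB i
    ext y
    simp [π]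
  let cyl : Finset ℕ → Set (ℕ → Bool) := fun T => ⋂ i ∈ T, {ω | ω i = true}
  have hcyl : ∀ T, IsClopen (cyl T) := fun T =>
    isClopen_biInter_finset fun i _ => (isClopen_discrete {true}).preimage (continuous_apply i)
  have hπcyl : ∀ T, π ⁻¹' cyl T = ⋂ i ∈ T, B i := fun T => by
    ext y
    simp [π, cyl]
  obtain ⟨ν, -, φ, hφ, hν⟩ := isCompact_univ.tendsto_subseq
    (x := fun m => (μ m).map hπ.aemeasurable) (fun _ => trivial)
  have hlim : ∀ T, Tendsto (fun k => μ (φ k) (⋂ i ∈ T, B i)) atTop (𝓝 (ν (cyl T))) := by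
    intro T
    refine (ProbabilityMeasure.tendsto_measure_of_isClopen_of_tendsto hν (hcyl T)).congr
      fun k => ?_
    simp only [Function.comp_apply]
    rw [ProbabilityMeasure.map_apply _ _ (hcyl T).isClosed.measurableSet, hπcyl]
  have hνB : ∀ i, (γ : ℝ≥0∞) ≤ (ν : Measure (ℕ → Bool)) (cyl {i}) := by
    intro i
    rw [← ProbabilityMeasure.ennreal_coeFn_eq_coeFn_toMeasure, ENNReal.coe_le_coe]
    refine ge_of_tendsto (hlim {i}) ?_
    filter_upwards [hφ.tendsto_atTop.eventually (hμB i)] with k hk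
    simpa using hk
  let Z := ⋃ T : {T : Finset ℕ // ν (cyl T) = 0}, cyl T.1
  have hZ : (ν : Measure (ℕ → Bool)) Z = 0 := measure_iUnion_null fun T => by
    rw [← ProbabilityMeasure.ennreal_coeFn_eq_coeFn_toMeasure, T.2, ENNReal.coe_zero]
  obtain ⟨ω, hω, hωZ⟩ : ({ω | ∃ᶠ i in atTop, ω ∈ cyl {i}} \ Z).Nonempty := by
    refine nonempty_of_measure_ne_zero (μ := (ν : Measure (ℕ → Bool))) ?_
    rw [measure_sdiff_null hZ]
    exact ((ENNReal.coe_pos.mpr hγ).trans_le (le_measure_setOf_frequently_mem _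
      (fun i => (hcyl {i}).isClosed.measurableSet) hνB)).ne'
  refine ⟨{i | ω i = true}, Nat.frequently_atTop_iff_infinite.mp (by simpa [cyl] using hω),
    fun T hT => ?_⟩
  have hνT : ν (cyl T) ≠ 0 := fun h =>
    hωZ (mem_iUnion.2 ⟨⟨T, h⟩, mem_iInter₂.2 fun i hi => hT hi⟩)
  obtain ⟨k, hk⟩ := ((hlim T).eventually (lt_mem_nhds (pos_iff_ne_zero.2 hνT))).exists
  exact ⟨φ k, hk⟩

abbrev ConvDelta (Z : Type*) := {p : Z → ℝ // IsConvDelta p}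

namespace IsConvDelta

variable {Y : Type*} {q : Y → ℝ}

theorem nonneg (hq : IsConvDelta q) (y : Y) : 0 ≤ q y := hq.1 y

theorem countable_support (hq : IsConvDelta q) : (Function.support q).Countable := hq.2.1

theorem summable (hq : IsConvDelta q) : Summable q := hq.2.2.summable

theorem tsum_eq_one (hq : IsConvDelta q) : ∑' y, q y = 1 := hq.2.2.tsum_eq

theorem summable_mul (hq : IsConvDelta q) {g : Y → ℝ} {C : ℝ} (hg : ∀ y, |g y| ≤ C) :
    Summable fun y => q y * g y :=
  (hq.summable.mul_right C).of_norm_bounded fun y => by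
    rw [Real.norm_eq_abs, abs_mul, abs_of_nonneg (hq.nonneg y)]
    exact mul_le_mul_of_nonneg_left (hg y) (hq.nonneg y)

theorem tsum_mul_sub (hq : IsConvDelta q) {g h : Y → ℝ} {C : ℝ} (hg : ∀ y, |g y| ≤ C)
    (hh : ∀ y, |h y| ≤ C) :
    ∑' y, q y * (g y - h y) = ∑' y, q y * g y - ∑' y, q y * h y := by
  simp_rw [mul_sub]
  exact (hq.summable_mul hg).tsum_sub (hq.summable_mul hh)

theorem tsum_mul_mem_Icc (hq : IsConvDelta q) {g : Y → ℝ} (hg : ∀ y, g y ∈ Icc (0 : ℝ) 1) :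
    ∑' y, q y * g y ∈ Icc (0 : ℝ) 1 := by
  refine ⟨tsum_nonneg fun y => mul_nonneg (hq.nonneg y) (hg y).1, ?_⟩
  calc ∑' y, q y * g y ≤ ∑' y, q y :=
        (hq.summable_mul fun y => abs_le_one_of_mem_Icc (hg y)).tsum_le_tsum
          (fun y => mul_le_of_le_one_right (hq.nonneg y) (hg y).2) hq.summable
    _ = 1 := hq.tsum_eq_one

theorem tsum_mul_sub_le_mass (hq : IsConvDelta q) {D : Y → ℝ} (hD : ∀ y, |D y| ≤ 1)
    {γ : ℝ} (hγ : 0 ≤ γ) : ∑' y, q y * D y - γ ≤ ∑' y, {y | γ < D y}.indicator q y := by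
  have hpt : ∀ y, q y * D y ≤ {y | γ < D y}.indicator q y + γ * q y := fun y => by
    by_cases hy : γ < D y
    · rw [indicator_of_mem (show y ∈ {y | γ < D y} from hy)]
      nlinarith [hq.nonneg y, (abs_le.1 (hD y)).2]
    · rw [indicator_of_notMem (show y ∉ {y | γ < D y} from hy)]
      nlinarith [hq.nonneg y]
  have hs := (hq.summable.indicator {y | γ < D y}).add (hq.summable.mul_left γ)
  have := (hq.summable_mul hD).tsum_le_tsum hpt hs
  rw [(hq.summable.indicator _).tsum_add (hq.summable.mul_left γ), tsum_mul_left,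
    hq.tsum_eq_one] at this
  linarith

theorem tendsto_tsum_mul (hq : IsConvDelta q) {g : ℕ → Y → ℝ} {h : Y → ℝ}
    (hg : ∀ k y, |g k y| ≤ 1)
    (hlim : ∀ y, q y ≠ 0 → Tendsto (fun k => g k y) atTop (𝓝 (h y))) :
    Tendsto (fun k => ∑' y, q y * g k y) atTop (𝓝 (∑' y, q y * h y)) := by
  refine tendsto_tsum_of_dominated_convergence hq.summable (fun y => ?_)
    (Eventually.of_forall fun k y => ?_)
  · by_cases hy : q y = 0
    · simp [hy]
    · exact (hlim y hy).const_mul _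
  · rw [Real.norm_eq_abs, abs_mul, abs_of_nonneg (hq.nonneg y)]
    exact mul_le_of_le_one_right (hq.nonneg y) (hg k y)

noncomputable def toPMF (hq : IsConvDelta q) : PMF Y :=
  ⟨fun y => ENNReal.ofReal (q y), ENNReal.summable.hasSum_iff.2 <| by
    rw [← ENNReal.ofReal_tsum_of_nonneg hq.nonneg hq.summable, hq.tsum_eq_one, ENNReal.ofReal_one]⟩

@[simp]
theorem toPMF_apply (hq : IsConvDelta q) (y : Y) : hq.toPMF y = ENNReal.ofReal (q y) := rfl

noncomputable def toProbabilityMeasure [MeasurableSpace Y] (hq : IsConvDelta q) :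
    ProbabilityMeasure Y :=
  ⟨hq.toPMF.toMeasure, inferInstance⟩

theorem toProbabilityMeasure_apply [MeasurableSpace Y] (hq : IsConvDelta q) {s : Set Y}
    (hs : MeasurableSet s) : hq.toProbabilityMeasure s = (∑' y, s.indicator q y).toNNReal := by
  have hind : s.indicator hq.toPMF = fun y => ENNReal.ofReal (s.indicator q y) := by
    ext y
    by_cases hy : y ∈ s <;> simp [hy]
  rw [toProbabilityMeasure, ProbabilityMeasure.coeFn_mk]
  dsimp only
  rw [PMF.toMeasure_apply _ hs, hind, ← ENNReal.ofReal_tsum_of_nonneg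
    (fun y => indicator_nonneg (fun y _ => hq.nonneg y) y) (hq.summable.indicator s)]
  rfl

theorem exists_mem_ne_zero_of_toProbabilityMeasure_pos [MeasurableSpace Y]
    (hq : IsConvDelta q) {s : Set Y} (hs : MeasurableSet s) (h : 0 < hq.toProbabilityMeasure s) :
    ∃ y ∈ s, q y ≠ 0 := by
  have h' : hq.toPMF.toMeasure s ≠ 0 := fun h0 => by
    simp [toProbabilityMeasure, h0] at h
  rw [Ne, PMF.toMeasure_apply_eq_zero_iff _ hs, not_disjoint_iff] at h'
  obtain ⟨y, hy, hys⟩ := h'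
  refine ⟨y, hys, fun h0 => (PMF.mem_support_iff _ _).1 hy ?_⟩
  simp [h0]

theorem single [DecidableEq Y] (y : Y) : IsConvDelta (Pi.single y 1) :=
  ⟨fun z => by by_cases h : z = y <;> simp [h],
    (countable_singleton y).mono (Pi.support_single_subset), hasSum_pi_single y 1⟩

end IsConvDelta

theorem exists_strictMono_forall_exists_mem_of_le_mass {Y : Type*} (q : ℕ → ConvDelta Y)
    {B : ℕ → Set Y} {γ : ℝ} (hγ : 0 < γ)
    (hmass : ∀ i, ∀ᶠ j in atTop, γ ≤ ∑' y, (B i).indicator (q j).1 y) :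
    ∃ ι : ℕ → ℕ, StrictMono ι ∧ ∀ l, ∃ y, (∃ j, (q j).1 y ≠ 0) ∧ ∀ k ≤ l, y ∈ B (ι k) := by
  let : MeasurableSpace Y := ⊤
  obtain ⟨M, hM, hMB⟩ := exists_infinite_forall_measure_biInter_pos
    (fun j => (q j).2.toProbabilityMeasure) (B := B)
    (fun i => MeasurableSpace.measurableSet_top) (Real.toNNReal_pos.2 hγ) fun i =>
      (hmass i).mono fun j hj => by
        rw [(q j).2.toProbabilityMeasure_apply MeasurableSpace.measurableSet_top]
        exact Real.toNNReal_le_toNNReal hj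
  refine ⟨Nat.nth (· ∈ M), Nat.nth_strictMono hM, fun l => ?_⟩
  obtain ⟨j, hj⟩ := hMB ((Finset.range (l + 1)).image (Nat.nth (· ∈ M))) fun i hi => by
    obtain ⟨k, -, rfl⟩ := Finset.mem_image.1 hi
    exact Nat.nth_mem_of_infinite hM k
  obtain ⟨y, hyT, hy⟩ := (q j).2.exists_mem_ne_zero_of_toProbabilityMeasure_pos
    MeasurableSpace.measurableSet_top hj
  exact ⟨y, ⟨j, hy⟩, fun k hk =>
    mem_iInter₂.1 hyT _ (Finset.mem_image_of_mem _ (Finset.mem_range.2 (by omega)))⟩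

noncomputable def fcRight {A Y : Type*} (f : A → Y → ℝ) (x : A) (q : ConvDelta Y) : ℝ :=
  ∑' y, q.1 y * f x y

section fcRight

variable {A Y : Type*} {f : A → Y → ℝ}

theorem fcRight_mem_Icc (hf : ∀ x y, f x y ∈ Icc (0 : ℝ) 1) (x : A) (q : ConvDelta Y) :
    fcRight f x q ∈ Icc (0 : ℝ) 1 :=
  q.2.tsum_mul_mem_Icc (hf x)

theorem fcRight_one_sub (hf : ∀ x y, f x y ∈ Icc (0 : ℝ) 1) (x : A) (q : ConvDelta Y) :
    fcRight (fun x y => 1 - f x y) x q = 1 - fcRight f x q := by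
  rw [fcRight, q.2.tsum_mul_sub (C := 1) (fun _ => by norm_num)
    fun y => abs_le_one_of_mem_Icc (hf x y)]
  simp [fcRight, q.2.tsum_eq_one]

theorem DLP.le_of_tendsto_fcRight (hf : ∀ x y, f x y ∈ Icc (0 : ℝ) 1) (h : DLP f)
    (a : ℕ → A) (q : ℕ → ConvDelta Y) (u v : ℕ → ℝ) (L L' : ℝ)
    (hu : ∀ i, Tendsto (fun j => fcRight f (a i) (q j)) atTop (𝓝 (u i)))
    (huL : Tendsto u atTop (𝓝 L))
    (hv : ∀ j, Tendsto (fun i => fcRight f (a i) (q j)) atTop (𝓝 (v j)))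
    (hvL : Tendsto v atTop (𝓝 L')) : L' ≤ L := by
  by_contra! hLL
  obtain ⟨φ, hφ, g, hg01, hg⟩ := exists_strictMono_tendsto_on_countable
    (countable_iUnion fun j => (q j).2.countable_support) (fun k y => f (a k) y) fun k y => hf _ _
  have hv_eq : ∀ j, v j = ∑' y, (q j).1 y * g y := fun j =>
    tendsto_nhds_unique ((hv j).comp hφ.tendsto_atTop) <|
      (q j).2.tendsto_tsum_mul (fun k y => abs_le_one_of_mem_Icc (hf _ _))
        fun y hy => hg y (mem_iUnion.2 ⟨j, hy⟩)
  set γ := (L' - L) / 4 with hγ_def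
  have hγ : 0 < γ := by linarith
  obtain ⟨I₀, hI₀⟩ := eventually_atTop.1 <|
    (huL.comp hφ.tendsto_atTop).eventually (eventually_lt_nhds (show L < L + γ by linarith))
  set a' : ℕ → A := fun i => a (φ (i + I₀))
  set B : ℕ → Set Y := fun i => {y | γ < g y - f (a' i) y}
  have hD : ∀ i y, |g y - f (a' i) y| ≤ 1 := fun i y =>
    abs_sub_le_of_nonneg_of_le (hg01 y).1 (hg01 y).2 (hf _ y).1 (hf _ y).2
  have hmass : ∀ i, ∀ᶠ j in atTop, γ ≤ ∑' y, (B i).indicator (q j).1 y := by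
    intro i
    have hlim : Tendsto (fun j => ∑' y, (q j).1 y * (g y - f (a' i) y)) atTop
        (𝓝 (L' - u (φ (i + I₀)))) := by
      simp_rw [(q _).2.tsum_mul_sub (fun y => abs_le_one_of_mem_Icc (hg01 y))
        fun y => abs_le_one_of_mem_Icc (hf (a' i) y)]
      exact (hvL.congr hv_eq).sub (hu _)
    have hu_small : u (φ (i + I₀)) < L + γ := hI₀ (i + I₀) (by omega)
    have h2γ : 2 * γ < L' - u (φ (i + I₀)) := by linarith
    filter_upwards [hlim.eventually (eventually_gt_nhds h2γ)] with j hj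
    linarith [(q j).2.tsum_mul_sub_le_mass (hD i) hγ.le]
  obtain ⟨ι, hι, hwit⟩ := exists_strictMono_forall_exists_mem_of_le_mass q hγ hmass
  choose y hy_supp hyB using hwit
  refine h.false_of_gap hf (fun k => a' (ι k)) y (fun l => g (y l)) (fun l => ?_) hγ
    fun k l hkl => ?_
  · exact (hg (y l) (mem_iUnion.2 (hy_supp l))).comp (hι.add_const I₀).tendsto_atTop
  · have : γ < g (y l) - f (a' (ι k)) (y l) := hyB l k hkl
    linarith

theorem DLP.fcRight (hf : ∀ x y, f x y ∈ Icc (0 : ℝ) 1) (h : DLP f) : DLP (fcRight f) := by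
  intro a q u v L L' hu huL hv hvL
  have hf' : ∀ x y, 1 - f x y ∈ Icc (0 : ℝ) 1 := fun x y =>
    ⟨sub_nonneg.2 (hf x y).2, sub_le_self _ (hf x y).1⟩
  have hle := (h.const_sub 1).le_of_tendsto_fcRight hf' a q (1 - u ·) (1 - v ·) (1 - L) (1 - L')
    (fun i => by simpa [fcRight_one_sub hf] using (hu i).const_sub 1) (huL.const_sub 1)
    (fun j => by simpa [fcRight_one_sub hf] using (hv j).const_sub 1) (hvL.const_sub 1)
  linarith [h.le_of_tendsto_fcRight hf a q u v L L' hu huL hv hvL]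

end fcRight

section fc

variable {X Y : Type*}

theorem fc_eq_fcRight_swap_fcRight {f : X → Y → ℝ} (hf : ∀ x y, f x y ∈ Icc (0 : ℝ) 1)
    (p : ConvDelta X) (q : ConvDelta Y) :
    fc f p.1 q.1 = fcRight (Function.swap (fcRight f)) q p := by
  have hbound : ∀ z : X × Y, p.1 z.1 * q.1 z.2 * f z.1 z.2 ≤ p.1 z.1 * q.1 z.2 := fun z =>
    mul_le_of_le_one_right (mul_nonneg (p.2.nonneg _) (q.2.nonneg _)) (hf _ _).2
  have hnonneg : ∀ z : X × Y, 0 ≤ p.1 z.1 * q.1 z.2 * f z.1 z.2 := fun z =>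
    mul_nonneg (mul_nonneg (p.2.nonneg _) (q.2.nonneg _)) (hf _ _).1
  have hs : Summable fun z : X × Y => p.1 z.1 * q.1 z.2 * f z.1 z.2 :=
    (p.2.summable.mul_of_nonneg q.2.summable p.2.nonneg q.2.nonneg).of_nonneg_of_le hnonneg hbound
  rw [fc, hs.tsum_prod' fun x => (q.2.summable.mul_left (p.1 x)).of_nonneg_of_le
    (fun y => hnonneg (x, y)) fun y => hbound (x, y)]
  simp only [fcRight, Function.swap, ← tsum_mul_left, mul_assoc]

theorem fc_single [DecidableEq X] [DecidableEq Y] (f : X → Y → ℝ) (x : X) (y : Y) :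
    fc f (Pi.single x 1) (Pi.single y 1) = f x y := by
  rw [fc, tsum_eq_single (x, y)]
  · simp
  · rintro ⟨x', y'⟩ hne
    by_cases hx : x' = x
    · have hy : y' ≠ y := fun hy => hne (by rw [hx, hy])
      simp [hy]
    · simp [hx]

end fc

/-- a `[0,1]`-valued function `f` on `X × Y` has the double limit
property iff its convex extension `f_c` on `conv_δ(X) × conv_δ(Y)` does. -/
theorem dlp_iff_dlp_convex {X Y : Type*} (f : X → Y → ℝ)
    (hf : ∀ x y, f x y ∈ Set.Icc (0 : ℝ) 1) :
    DLP f ↔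
      DLP (fun (p : {p : X → ℝ // IsConvDelta p}) (q : {q : Y → ℝ // IsConvDelta q}) =>
        fc f p.1 q.1) := by
  classical
  refine ⟨fun h => ?_, fun h => ?_⟩
  · simp_rw [fc_eq_fcRight_swap_fcRight hf]
    exact ((h.fcRight hf).flip_s7.fcRight fun q x => fcRight_mem_Icc hf x q).flip_s7
  · simpa [fc_single] using
      h.comp (fun x => ⟨_, IsConvDelta.single x⟩) fun y => ⟨_, IsConvDelta.single y⟩
end

section
/- Let X and Y be sets and R ⊆ X × Y a relation. Then the indicator χ_R has the double limit property if and only if R does not have the order property, i.e., there do not exist sequences (a_i)_{i∈ℕ} in X and (b_j)_{j∈ℕ} in Y such that either for all i ≠ j, (a_i, b_j) ∈ R if and only if i < j, or for all i ≠ j, (a_i, b_j) ∈ R if and only if i > j. -/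
open Filter Topology

lemma zeroOne_limit (w : ℕ → ℝ) (c : ℝ) (hw : ∀ n, w n = 0 ∨ w n = 1)
    (h : Tendsto w atTop (𝓝 c)) :
    (c = 1 ∧ ∀ᶠ n in atTop, w n = 1) ∨ (c = 0 ∧ ∀ᶠ n in atTop, w n = 0) := by
  have h2 : ∀ᶠ n in atTop, |w n - c| < 1/2 := by
    have := Metric.tendsto_nhds.1 h (1/2) (by norm_num)
    simpa [Real.dist_eq] using this
  by_cases hc : (1:ℝ)/2 ≤ c
  · left
    have hev : ∀ᶠ n in atTop, w n = 1 := by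
      filter_upwards [h2] with n hn
      rcases hw n with h0 | h1
      · rw [h0] at hn; rw [abs_sub_comm] at hn
        have : |c - 0| = c := by rw [sub_zero, abs_of_nonneg (by linarith)]
        rw [this] at hn; linarith
      · exact h1
    refine ⟨?_, hev⟩
    have : Tendsto w atTop (𝓝 1) :=
      tendsto_const_nhds.congr' (by filter_upwards [hev] with n hn; exact hn.symm)
    exact (tendsto_nhds_unique h this)
  · right
    push_neg at hc
    have hev : ∀ᶠ n in atTop, w n = 0 := by
      filter_upwards [h2] with n hn
      rcases hw n with h0 | h1
      · exact h0
      · rw [h1] at hn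
        have : (1:ℝ) - c ≤ |1 - c| := le_abs_self _
        linarith
    refine ⟨?_, hev⟩
    have : Tendsto w atTop (𝓝 0) :=
      tendsto_const_nhds.congr' (by filter_upwards [hev] with n hn; exact hn.symm)
    exact (tendsto_nhds_unique h this)

lemma chi_zero_one {X Y : Type*} (R : Set (X × Y)) (x : X) (y : Y) :
    chi R x y = 0 ∨ chi R x y = 1 := by
  unfold chi; split <;> simp

lemma chi_eq_one_iff {X Y : Type*} (R : Set (X × Y)) (x : X) (y : Y) :
    chi R x y = 1 ↔ (x, y) ∈ R := by
  unfold chi; split <;> simp_all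

lemma key_order {X Y : Type*} (R : Set (X × Y)) (a : ℕ → X) (b : ℕ → Y) (I J : ℕ)
    (H1 : ∀ m, I ≤ m → ∀ᶠ j in atTop, (a m, b j) ∈ R)
    (H2 : ∀ m, J ≤ m → ∀ᶠ i in atTop, (a i, b m) ∉ R) :
    ∃ (a' : ℕ → X) (b' : ℕ → Y), ∀ k l, k ≠ l → ((a' k, b' l) ∈ R ↔ k < l) := by
  have stepI : ∀ p q : ℕ, ∃ p', p < p' ∧ ∀ m, J ≤ m → m ≤ q → (a p', b m) ∉ R := by
    intro p q
    have h : ∀ᶠ i in atTop, ∀ m ∈ Finset.Icc J q, (a i, b m) ∉ R := by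
      rw [Filter.eventually_all_finset]
      intro m hm
      exact H2 m (Finset.mem_Icc.1 hm).1
    obtain ⟨i, hi1, hi2⟩ := (h.and (eventually_gt_atTop p)).exists
    exact ⟨i, hi2, fun m hm1 hm2 => hi1 m (Finset.mem_Icc.2 ⟨hm1, hm2⟩)⟩
  have stepJ : ∀ q p : ℕ, ∃ q', q < q' ∧ J ≤ q' ∧
      ∀ m, I ≤ m → m ≤ p → (a m, b q') ∈ R := by
    intro q p
    have h : ∀ᶠ j in atTop, ∀ m ∈ Finset.Icc I p, (a m, b j) ∈ R := by
      rw [Filter.eventually_all_finset]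
      intro m hm
      exact H1 m (Finset.mem_Icc.1 hm).1
    obtain ⟨j, ⟨hj1, hj2⟩, hj3⟩ :=
      ((h.and (eventually_gt_atTop q)).and (eventually_ge_atTop J)).exists
    exact ⟨j, hj2, hj3, fun m hm1 hm2 => hj1 m (Finset.mem_Icc.2 ⟨hm1, hm2⟩)⟩
  choose f hf1 hf2 using stepI
  choose g hg1 hg2 hg3 using stepJ
  set s : ℕ → ℕ × ℕ :=
    fun n => Nat.rec (I, g 0 I) (fun _ st => (f st.1 st.2, g st.2 (f st.1 st.2))) n with hs
  have hs0 : s 0 = (I, g 0 I) := rfl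
  have hsn : ∀ n, s (n + 1) = (f (s n).1 (s n).2, g (s n).2 (f (s n).1 (s n).2)) :=
    fun n => rfl
  have hmono1 : StrictMono (fun n => (s n).1) := by
    apply strictMono_nat_of_lt_succ
    intro n
    rw [hsn n]
    exact hf1 _ _
  have hmono2 : StrictMono (fun n => (s n).2) := by
    apply strictMono_nat_of_lt_succ
    intro n
    rw [hsn n]
    exact hg1 _ _
  have hI : ∀ n, I ≤ (s n).1 := by
    intro n
    induction n with
    | zero => simp [hs0]
    | succ n ih => exact le_of_lt (lt_of_le_of_lt ih (hmono1 (Nat.lt_succ_self n)))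
  have hJ : ∀ n, J ≤ (s n).2 := by
    intro n
    cases n with
    | zero => exact hg2 0 I
    | succ n => rw [hsn n]; exact hg2 _ _
  have hin : ∀ n m, I ≤ m → m ≤ (s n).1 → (a m, b (s n).2) ∈ R := by
    intro n
    cases n with
    | zero => exact hg3 0 I
    | succ n => rw [hsn n]; exact hg3 _ _
  have hout : ∀ n m, J ≤ m → m ≤ (s n).2 → (a (s (n + 1)).1, b m) ∉ R := by
    intro n
    rw [hsn n]
    exact hf2 _ _
  refine ⟨fun k => a (s k).1, fun l => b (s l).2, ?_⟩
  intro k l hkl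
  constructor
  · intro hmem
    by_contra hlt
    have hlk : l < k := by omega
    obtain ⟨k', rfl⟩ : ∃ k', k = k' + 1 := ⟨k - 1, by omega⟩
    exact hout k' (s l).2 (hJ l) (hmono2.monotone (by omega)) hmem
  · intro hkl'
    exact hin l (s k).1 (hI k) (hmono1.monotone hkl'.le)

/-- the indicator of `R` has the double limit property iff `R`
does not have the order property. -/
theorem dlp_iff_no_order_property {X Y : Type*} (R : Set (X × Y)) :
    DLP (chi R) ↔
      ¬ ∃ (a : ℕ → X) (b : ℕ → Y),
        (∀ i j : ℕ, i ≠ j → ((a i, b j) ∈ R ↔ i < j)) ∨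
        (∀ i j : ℕ, i ≠ j → ((a i, b j) ∈ R ↔ i > j)) := by
  constructor
  · rintro hDLP ⟨a, b, hab | hab⟩
    · have hu : ∀ i, Tendsto (fun j => chi R (a i) (b j)) atTop (𝓝 1) := by
        intro i
        apply tendsto_const_nhds.congr'
        filter_upwards [eventually_gt_atTop i] with j hj
        exact ((chi_eq_one_iff R (a i) (b j)).2 ((hab i j hj.ne).2 hj)).symm
      have hv : ∀ j, Tendsto (fun i => chi R (a i) (b j)) atTop (𝓝 0) := by
        intro j
        apply tendsto_const_nhds.congr'
        filter_upwards [eventually_gt_atTop j] with i hi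
        have : (a i, b j) ∉ R := fun hm => by
          have := (hab i j hi.ne').1 hm; omega
        simp [chi, this]
      have := hDLP a b (fun _ => 1) (fun _ => 0) 1 0 hu tendsto_const_nhds
        hv tendsto_const_nhds
      norm_num at this
    · have hu : ∀ i, Tendsto (fun j => chi R (a i) (b j)) atTop (𝓝 0) := by
        intro i
        apply tendsto_const_nhds.congr'
        filter_upwards [eventually_gt_atTop i] with j hj
        have : (a i, b j) ∉ R := fun hm => by
          have := (hab i j hj.ne).1 hm; omega
        simp [chi, this]
      have hv : ∀ j, Tendsto (fun i => chi R (a i) (b j)) atTop (𝓝 1) := by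
        intro j
        apply tendsto_const_nhds.congr'
        filter_upwards [eventually_gt_atTop j] with i hi
        exact ((chi_eq_one_iff R (a i) (b j)).2 ((hab i j hi.ne').2 hi)).symm
      have := hDLP a b (fun _ => 0) (fun _ => 1) 0 1 hu tendsto_const_nhds
        hv tendsto_const_nhds
      norm_num at this
  · intro h
    intro a b u v L L' hu hL hv hL'
    by_contra hne
    -- classify each u i and v j
    have hui : ∀ i, (u i = 1 ∧ ∀ᶠ j in atTop, (a i, b j) ∈ R) ∨
        (u i = 0 ∧ ∀ᶠ j in atTop, (a i, b j) ∉ R) := by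
      intro i
      rcases zeroOne_limit _ _ (fun j => chi_zero_one R (a i) (b j)) (hu i) with
        ⟨h1, h2⟩ | ⟨h1, h2⟩
      · exact Or.inl ⟨h1, by filter_upwards [h2] with j hj
          using (chi_eq_one_iff R (a i) (b j)).1 hj⟩
      · refine Or.inr ⟨h1, ?_⟩
        filter_upwards [h2] with j hj hm
        rw [(chi_eq_one_iff R (a i) (b j)).2 hm] at hj
        norm_num at hj
    have hvj : ∀ j, (v j = 1 ∧ ∀ᶠ i in atTop, (a i, b j) ∈ R) ∨
        (v j = 0 ∧ ∀ᶠ i in atTop, (a i, b j) ∉ R) := by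
      intro j
      rcases zeroOne_limit _ _ (fun i => chi_zero_one R (a i) (b j)) (hv j) with
        ⟨h1, h2⟩ | ⟨h1, h2⟩
      · exact Or.inl ⟨h1, by filter_upwards [h2] with i hi
          using (chi_eq_one_iff R (a i) (b j)).1 hi⟩
      · refine Or.inr ⟨h1, ?_⟩
        filter_upwards [h2] with i hi hm
        rw [(chi_eq_one_iff R (a i) (b j)).2 hm] at hi
        norm_num at hi
    have hu01 : ∀ i, u i = 0 ∨ u i = 1 := by
      intro i; rcases hui i with ⟨h1, _⟩ | ⟨h1, _⟩
      · exact Or.inr h1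
      · exact Or.inl h1
    have hv01 : ∀ j, v j = 0 ∨ v j = 1 := by
      intro j; rcases hvj j with ⟨h1, _⟩ | ⟨h1, _⟩
      · exact Or.inr h1
      · exact Or.inl h1
    rcases zeroOne_limit u L hu01 hL with ⟨hL1, hLe⟩ | ⟨hL0, hLe⟩ <;>
      rcases zeroOne_limit v L' hv01 hL' with ⟨hL'1, hL'e⟩ | ⟨hL'0, hL'e⟩
    · exact hne (hL1.trans hL'1.symm)
    · -- L = 1, L' = 0 : order property (i < j)
      obtain ⟨I, hIe⟩ := hLe.exists_forall_of_atTop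
      obtain ⟨J, hJe⟩ := hL'e.exists_forall_of_atTop
      have H1 : ∀ m, I ≤ m → ∀ᶠ j in atTop, (a m, b j) ∈ R := by
        intro m hm
        rcases hui m with ⟨_, h2⟩ | ⟨h1, _⟩
        · exact h2
        · rw [hIe m hm] at h1; norm_num at h1
      have H2 : ∀ m, J ≤ m → ∀ᶠ i in atTop, (a i, b m) ∉ R := by
        intro m hm
        rcases hvj m with ⟨h1, _⟩ | ⟨_, h2⟩
        · rw [hJe m hm] at h1; norm_num at h1
        · exact h2
      obtain ⟨a', b', hab⟩ := key_order R a b I J H1 H2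
      exact h ⟨a', b', Or.inl hab⟩
    · -- L = 0, L' = 1 : order property (i > j), via the swapped relation
      obtain ⟨I, hIe⟩ := hLe.exists_forall_of_atTop
      obtain ⟨J, hJe⟩ := hL'e.exists_forall_of_atTop
      set R' : Set (Y × X) := {p | (p.2, p.1) ∈ R} with hR'
      have H1 : ∀ m, J ≤ m → ∀ᶠ i in atTop, (b m, a i) ∈ R' := by
        intro m hm
        rcases hvj m with ⟨_, h2⟩ | ⟨h1, _⟩
        · exact h2
        · rw [hJe m hm] at h1; norm_num at h1
      have H2 : ∀ m, I ≤ m → ∀ᶠ j in atTop, (b j, a m) ∉ R' := by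
        intro m hm
        rcases hui m with ⟨h1, _⟩ | ⟨_, h2⟩
        · rw [hIe m hm] at h1; norm_num at h1
        · exact h2
      obtain ⟨b', a', hab⟩ := key_order R' b a J I H1 H2
      exact h ⟨a', b', Or.inr fun i j hij => (hab j i (Ne.symm hij))⟩
    · exact hne (hL0.trans hL'0.symm)
end
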